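/- arXiv:1012.5122 — 7 statements merged into one kernel-verified Lean document; each statement's English description precedes it below -/
import Mathlib

section
/- Let G be a group and H₁, H₂ subgroups of G. If for every normal subgroup N of finite index in G the image of H₂ in G/N is conjugate to a subgroup of the image of H₁ in G/N, then for every finite-index subgroup D of G containing H₁, there exists g ∈ G with g⁻¹H₂g ≤ D. -/
/-! Apply the hypothesis to the normal core `N` of `D`, which has finite index. A conjugate
of `H₂` then lands in the preimage of `H₁N/N`, that is in `H₁N ≤ D`. -/

/-- `A` is conjugate into `B`: some conjugate `g⁻¹Ag` is contained in `B`. -/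
def ConjInto {G : Type*} [Group G] (A B : Subgroup G) : Prop :=
  ∃ g : G, ∀ a ∈ A, g⁻¹ * a * g ∈ B

namespace ConjInto

variable {G : Type*} [Group G]

theorem mono_right {A B C : Subgroup G} (hAB : ConjInto A B) (hBC : B ≤ C) : ConjInto A C :=
  let ⟨g, hg⟩ := hAB
  ⟨g, fun a ha => hBC (hg a ha)⟩

theorem of_map {Q : Type*} [Group Q] {f : G →* Q} (hf : Function.Surjective f)
    {A B : Subgroup G} (h : ConjInto (A.map f) (B.map f)) : ConjInto A (B ⊔ f.ker) := by
  obtain ⟨q, hq⟩ := h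
  obtain ⟨g, rfl⟩ := hf q
  refine ⟨g, fun a ha => ?_⟩
  rw [← Subgroup.comap_map_eq, Subgroup.mem_comap, map_mul, map_mul, map_inv]
  exact hq (f a) ⟨a, ha, rfl⟩

end ConjInto

theorem stmt0 {G : Type*} [Group G] (H₁ H₂ : Subgroup G)
    (h : ∀ (N : Subgroup G) [N.Normal], N.index ≠ 0 →
      ConjInto (H₂.map (QuotientGroup.mk' N)) (H₁.map (QuotientGroup.mk' N)))
    (D : Subgroup G) (hD : H₁ ≤ D) (hDi : D.index ≠ 0) :
    ∃ g : G, ∀ a ∈ H₂, g⁻¹ * a * g ∈ D := by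
  have : D.FiniteIndex := ⟨hDi⟩
  have hconj := ConjInto.of_map (QuotientGroup.mk'_surjective D.normalCore)
    (h D.normalCore (Subgroup.finiteIndex_normalCore D).index_ne_zero)
  rw [QuotientGroup.ker_mk'] at hconj
  exact hconj.mono_right (sup_le hD D.normalCore_le)
end

section
/- Let F be a finitely generated free group and H a finitely generated subgroup. There is no strictly ascending chain H < H^x < H^{x²} < ... of conjugates of H by powers of a fixed element x ∈ F; equivalently, if x⁻¹Hx > H then the chain of conjugates H^{xⁿ} cannot all be subgroups of F of rank bounded by rank(H). More precisely: if x ∈ F and H ≤ x⁻¹Hx, then H = x⁻¹Hx. -/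
/-
Marshall Hall's theorem: a finitely generated subgroup `H` of a free group is closed in the
profinite topology. Indeed, the finitely many cosets `tH` met by suffixes `t` of the words
spelling the generators of `H` and a given `g ∉ H` can be permuted so that each generator
of the free group acts as on `F ⧸ H` wherever it stays inside this finite set; the resulting
finite permutation representation has a point stabilizer of finite index containing `H` but
not `g`.

Now let `xHx⁻¹ ≤ H` and suppose `x⁻¹hx ∉ H`, separated from `H` by a finite-index `K`. With
`N` the normal core of `K`, the finite-index subgroup `L = HN ≤ K` also satisfies
`xLx⁻¹ ≤ L`, so `xLx⁻¹ = L` as conjugation preserves the index. Hence `x⁻¹hx ∈ L ≤ K`,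
a contradiction.
-/

open Equiv

def Subgroup.IsSeparable {G : Type*} [Group G] (H : Subgroup G) : Prop :=
  ∀ g ∉ H, ∃ K : Subgroup G, K.FiniteIndex ∧ H ≤ K ∧ g ∉ K

namespace Subgroup

variable {G : Type*} [Group G]

theorem eq_map_of_le_map (K : Subgroup G) [K.FiniteIndex] (e : G ≃* G)
    (h : K ≤ K.map e.toMonoidHom) : K = K.map e.toMonoidHom :=
  h.eq_of_not_lt fun hlt => (index_strictAnti hlt).ne (K.index_map_equiv e)

theorem IsSeparable.eq_map_conj_of_le {H : Subgroup G} (hH : H.IsSeparable) {g : G}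
    (h : H ≤ H.map (MulAut.conj g).toMonoidHom) : H = H.map (MulAut.conj g).toMonoidHom := by
  refine le_antisymm h fun a ha => by_contra fun haH => ?_
  obtain ⟨K, hK, hHK, haK⟩ := hH a haH
  let L := H ⊔ K.normalCore
  have : L.FiniteIndex := finiteIndex_of_le le_sup_right
  have hL : L ≤ L.map (MulAut.conj g).toMonoidHom := by
    have hN : K.normalCore.map (MulAut.conj g).toMonoidHom = K.normalCore :=
      Normal.map_conj_eq _ g
    rw [map_sup, hN]
    exact sup_le_sup_right h _
  have hLK : L ≤ K := sup_le hHK K.normalCore_le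
  exact haK (hLK ((L.eq_map_of_le_map _ hL).symm ▸ map_mono le_sup_left ha))

end Subgroup

theorem MulAction.exists_perm_finset_agree {G Q : Type*} [Group G] [MulAction G Q]
    (g : G) (X : Finset Q) :
    ∃ σ : Perm X, (∀ q : X, g • (q : Q) ∈ X → (σ q : Q) = g • q) ∧
      ∀ q : X, g⁻¹ • (q : Q) ∈ X → (σ⁻¹ q : Q) = g⁻¹ • q := by
  classical
  let e : {q : X // g • (q : Q) ∈ X} ≃ {q : X // g⁻¹ • (q : Q) ∈ X} :=
    { toFun := fun q => ⟨⟨g • (q : Q), q.2⟩, by simp⟩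
      invFun := fun q => ⟨⟨g⁻¹ • (q : Q), q.2⟩, by simp⟩
      left_inv := fun q => by simp
      right_inv := fun q => by simp }
  refine ⟨e.extendSubtype, fun q hq => ?_, fun q hq => ?_⟩
  · rw [e.extendSubtype_apply_of_mem q hq]
    rfl
  · have hσ : e.extendSubtype ⟨g⁻¹ • (q : Q), hq⟩ = q := by
      rw [e.extendSubtype_apply_of_mem _ (by simp)]
      ext
      simp [e]
    rw [Perm.inv_eq_iff_eq.2 hσ.symm]

namespace FreeGroup

variable {α : Type*}

theorem mk_singleton_false (a : α) : mk [(a, false)] = (of a)⁻¹ := by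
  rw [of, inv_mk]
  rfl

theorem mk_cons (p : α × Bool) (l : List (α × Bool)) : mk (p :: l) = mk [p] * mk l := by
  rw [mul_mk]
  rfl

theorem exists_hom_perm_agree_on_suffixes {Q : Type*} [MulAction (FreeGroup α) Q]
    (X : Finset Q) :
    ∃ φ : FreeGroup α →* Perm X, ∀ (l : List (α × Bool)) (q : X),
      (∀ t, t <:+ l → mk t • (q : Q) ∈ X) → (φ (mk l) q : Q) = mk l • (q : Q) := by
  choose σ hσ hσinv using fun a : α => MulAction.exists_perm_finset_agree (of a) X
  refine ⟨lift σ, fun l q => ?_⟩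
  have letter : ∀ (p : α × Bool) (q : X), mk [p] • (q : Q) ∈ X →
      (lift σ (mk [p]) q : Q) = mk [p] • (q : Q) := by
    rintro ⟨a, _ | _⟩ q hq
    · rw [mk_singleton_false] at hq ⊢
      rw [_root_.map_inv, lift_apply_of]
      exact hσinv a q hq
    · exact hσ a q hq
  induction l with
  | nil =>
    intro _
    change ((lift σ 1) q : Q) = (1 : FreeGroup α) • (q : Q)
    simp
  | cons p l ih =>
    intro hsuf
    have hl : (lift σ (mk l) q : Q) = mk l • (q : Q) :=
      ih fun t ht => hsuf t (ht.trans (l.suffix_cons p))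
    have hmem : mk [p] • (lift σ (mk l) q : Q) ∈ X := by
      rw [hl, ← mul_smul, ← mk_cons]
      exact hsuf _ (List.suffix_refl _)
    rw [mk_cons, _root_.map_mul, Perm.mul_apply, letter _ _ hmem, hl, mul_smul]

theorem exists_finiteIndex_forall_mem_iff (H : Subgroup (FreeGroup α))
    (S : Finset (FreeGroup α)) :
    ∃ K : Subgroup (FreeGroup α), K.FiniteIndex ∧ ∀ w ∈ S, w ∈ K ↔ w ∈ H := by
  classical
  let q₀ : FreeGroup α ⧸ H := ((1 : FreeGroup α) : FreeGroup α ⧸ H)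
  let X : Finset (FreeGroup α ⧸ H) :=
    insert q₀ <| S.biUnion fun w =>
      w.toWord.tails.toFinset.image fun t => (mk t : FreeGroup α) • q₀
  have hX : ∀ w ∈ S, ∀ t, t <:+ w.toWord → (mk t : FreeGroup α) • q₀ ∈ X := fun w hw t ht =>
    Finset.mem_insert_of_mem <| Finset.mem_biUnion.2
      ⟨w, hw, Finset.mem_image_of_mem _ (List.mem_toFinset.2 ((List.mem_tails _ _).2 ht))⟩
  let x₀ : X := ⟨q₀, Finset.mem_insert_self _ _⟩
  obtain ⟨φ, hφ⟩ := exists_hom_perm_agree_on_suffixes (α := α) X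
  let K := (MulAction.stabilizer (Perm X) x₀).comap φ
  refine ⟨K, Subgroup.finiteIndex_of_le (φ.ker_le_comap _), fun w hw => ?_⟩
  have hφw : (φ w x₀ : FreeGroup α ⧸ H) = w • q₀ := by
    simpa only [mk_toWord] using hφ w.toWord x₀ (hX w hw)
  calc w ∈ K ↔ (φ w x₀ : FreeGroup α ⧸ H) = q₀ := Subtype.ext_iff
    _ ↔ w ∈ MulAction.stabilizer (FreeGroup α) q₀ := by rw [hφw]; rfl
    _ ↔ w ∈ H := by rw [MulAction.stabilizer_quotient]

theorem isSeparable_of_fg {H : Subgroup (FreeGroup α)} (hH : H.FG) : H.IsSeparable := by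
  classical
  intro g hg
  obtain ⟨T, rfl⟩ := hH
  obtain ⟨K, hK, hKT⟩ := exists_finiteIndex_forall_mem_iff (Subgroup.closure T) (insert g T)
  refine ⟨K, hK, (Subgroup.closure_le K).2 fun w hw => ?_, fun hgK => hg ?_⟩
  · exact (hKT w (Finset.mem_insert_of_mem hw)).2 (Subgroup.subset_closure hw)
  · exact (hKT g (Finset.mem_insert_self g T)).1 hgK

end FreeGroup

/-- In a free group of finite rank, a finitely generated subgroup cannot be properly
contained in its own conjugate: if `H ≤ x⁻¹Hx` then `H = x⁻¹Hx`.
Here membership in `x⁻¹Hx` is expressed by `h ∈ x⁻¹Hx ↔ x*h*x⁻¹ ∈ H`. -/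
theorem stmt3 (n : ℕ) (H : Subgroup (FreeGroup (Fin n))) (hH : H.FG)
    (x : FreeGroup (Fin n))
    (h : H ≤ Subgroup.map (MulAut.conj x⁻¹).toMonoidHom H) :
    H = Subgroup.map (MulAut.conj x⁻¹).toMonoidHom H :=
  (FreeGroup.isSeparable_of_fg hH).eq_map_conj_of_le h
end

section
/- Let G be a finitely generated virtually free group. If G is subgroup into-conjugacy separable (SICS), then G is subgroup conjugacy separable (SCS). -/
/-- Two subgroups are conjugate. -/
def ConjSubgroups {G : Type*} [Group G] (A B : Subgroup G) : Prop :=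
  ∃ g : G, Subgroup.map (MulAut.conj g).toMonoidHom A = B

/-- `G` is subgroup into-conjugacy separable. -/
def SICS (G : Type*) [Group G] : Prop :=
  ∀ H₁ H₂ : Subgroup G, H₁.FG → H₂.FG → ¬ ConjInto H₂ H₁ →
    ∃ (Q : Type) (_ : Group Q) (_ : Finite Q) (φ : G →* Q),
      Function.Surjective φ ∧ ¬ ConjInto (H₂.map φ) (H₁.map φ)

/-- `G` is subgroup conjugacy separable. -/
def SCS (G : Type*) [Group G] : Prop :=
  ∀ H₁ H₂ : Subgroup G, H₁.FG → H₂.FG → ¬ ConjSubgroups H₁ H₂ →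
    ∃ (Q : Type) (_ : Group Q) (_ : Finite Q) (φ : G →* Q),
      Function.Surjective φ ∧ ¬ ConjSubgroups (H₁.map φ) (H₂.map φ)

/-!
If `H₂` is not conjugate into `H₁`, or `H₁` not into `H₂`, then SICS separates them in a finite
quotient, and a fortiori separates their conjugacy classes. Otherwise some conjugate `t • H₁` lies
in `H₁`, and the point is that it equals `H₁`. Intersecting with a normal free subgroup of finite
index reduces this to a subgroup `A` of the free part. By Marshall Hall's theorem the finitely
generated subgroup `t • A` is closed in the profinite topology, while in every finite quotient
conjugation by `t` maps the image of `A` injectively into itself, hence onto itself; so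
`t • A = A`, and an index count lifts this to `t • H₁ = H₁`.
-/

open Subgroup
open scoped Pointwise

attribute [local instance] isFiniteRelIndex_of_finiteIndex

namespace Subgroup

variable {G G' : Type*} [Group G] [Group G']

instance finiteIndex_comap (M : Subgroup G') [M.FiniteIndex] (f : G →* G') :
    (M.comap f).FiniteIndex :=
  ⟨by rw [index_comap]; exact relIndex_ne_zero⟩

/-- `K` is closed in the profinite topology of `G`. -/
def IsSeparable_s5 (K : Subgroup G) : Prop :=
  ∀ x ∉ K, ∃ M : Subgroup G, M.FiniteIndex ∧ K ≤ M ∧ x ∉ M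

theorem FG.map {H : Subgroup G} (hH : H.FG) (f : G →* G') : (H.map f).FG := by
  classical
  obtain ⟨S, rfl⟩ := hH
  exact ⟨S.image f, by rw [Finset.coe_image, MonoidHom.map_closure]⟩

theorem FG.subgroupOf {K H : Subgroup G} (hK : K.FG) (hKH : K ≤ H) : (K.subgroupOf H).FG := by
  have : Group.FG K := (Group.fg_iff_subgroup_fg K).mpr hK
  have : Group.FG (K.subgroupOf H) :=
    Group.fg_of_surjective (f := (subgroupOfEquivOfLe hKH).symm.toMonoidHom)
      (subgroupOfEquivOfLe hKH).symm.surjective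
  exact (Group.fg_iff_subgroup_fg _).mp this

theorem FG.of_le_of_relIndex_ne_zero {A H : Subgroup G} (hH : H.FG) (hAH : A ≤ H)
    (hA : A.relIndex H ≠ 0) : A.FG := by
  have : Group.FG H := (Group.fg_iff_subgroup_fg H).mpr hH
  have : (A.subgroupOf H).FiniteIndex := ⟨hA⟩
  have hfg := ((Group.fg_iff_subgroup_fg _).mp (inferInstance : Group.FG (A.subgroupOf H))).map
    H.subtype
  rwa [map_subgroupOf_eq_of_le hAH] at hfg

theorem IsSeparable_s5.comap {K : Subgroup G'} (hK : K.IsSeparable_s5) (f : G →* G') :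
    (K.comap f).IsSeparable_s5 := fun x hx =>
  let ⟨M, _, hKM, hxM⟩ := hK (f x) hx
  ⟨M.comap f, inferInstance, comap_mono hKM, hxM⟩

theorem IsSeparable_s5.map_subtype {F : Subgroup G} [F.FiniteIndex] {K : Subgroup F}
    (hK : K.IsSeparable_s5) : (K.map F.subtype).IsSeparable_s5 := by
  intro x hx
  by_cases hxF : x ∈ F
  · obtain ⟨M, hM, hKM, hxM⟩ := hK ⟨x, hxF⟩ fun h => hx ⟨_, h, rfl⟩
    refine ⟨M.map F.subtype, ⟨?_⟩, map_mono hKM, ?_⟩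
    · rw [index_map_subtype]
      exact mul_ne_zero hM.index_ne_zero FiniteIndex.index_ne_zero
    · rintro ⟨y, hy, rfl⟩
      exact hxM hy
  · exact ⟨F, inferInstance, map_subtype_le K, hxF⟩

theorem smul_eq_of_smul_le_of_relIndex_ne_zero {α : Type*} [Group α] [MulDistribMulAction α G]
    (a : α) {A H : Subgroup G} (hAH : A ≤ H) (hA : A.relIndex H ≠ 0) (haA : a • A = A)
    (haH : a • H ≤ H) : a • H = H := by
  have hA_le : A ≤ a • H := haA ▸ pointwise_smul_le_pointwise_smul_iff.mpr hAH
  have hrel : A.relIndex (a • H) = A.relIndex H := by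
    rw [← relIndex_pointwise_smul a A H, haA]
  have h := relIndex_mul_relIndex A (a • H) H hA_le haH
  rw [hrel] at h
  exact le_antisymm haH (relIndex_eq_one.mp (mul_eq_left₀ hA |>.mp h))

end Subgroup

theorem MulAction.exists_perm_eq_smul {Γ α : Type*} [Group Γ] [MulAction Γ α] (D : Set α)
    [Finite D] (g : Γ) :
    ∃ σ : Equiv.Perm D, (∀ c : D, g • (c : α) ∈ D → (σ c : α) = g • c) ∧
      ∀ c : D, g⁻¹ • (c : α) ∈ D → (σ⁻¹ c : α) = g⁻¹ • c := by
  classical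
  let e : {c : D // g • (c : α) ∈ D} ≃ {c : D // g⁻¹ • (c : α) ∈ D} :=
    { toFun := fun c => ⟨⟨g • c.1.1, c.2⟩, by simp⟩
      invFun := fun c => ⟨⟨g⁻¹ • c.1.1, c.2⟩, by simp⟩
      left_inv := fun c => by simp
      right_inv := fun c => by simp }
  have he : ∀ c : D, ∀ hc : g • (c : α) ∈ D, e.extendSubtype c = ⟨g • c, hc⟩ := fun c hc =>
    (e.extendSubtype_apply_of_mem c hc).trans rfl
  refine ⟨e.extendSubtype, fun c hc => by rw [he c hc], fun c hc => ?_⟩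
  have : e.extendSubtype ⟨g⁻¹ • c, hc⟩ = c := by
    rw [he _ (by simp)]
    ext
    simp
  rw [Equiv.Perm.inv_eq_iff_eq.mpr this.symm]

namespace FreeGroup

theorem exists_hom_perm_mk_eq_smul {β α : Type*} [MulAction (FreeGroup β) α]
    (D : Set α) [Finite D] :
    ∃ φ : FreeGroup β →* Equiv.Perm D, ∀ (L : List (β × Bool)) (p : D),
      (∀ s, s <:+ L → mk s • (p : α) ∈ D) → (φ (mk L) p : α) = mk L • (p : α) := by
  choose σ hσ using fun b : β => MulAction.exists_perm_eq_smul D (of b)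
  refine ⟨lift σ, fun L p => ?_⟩
  induction L with
  | nil => intro; simp [← one_eq_mk]
  | cons a L ih =>
    intro hL
    have hmk : mk (a :: L) = mk [a] * mk L := by rw [mul_mk]; rfl
    have hp : (lift σ (mk L) p : α) = mk L • (p : α) :=
      ih fun s hs => hL s (hs.trans (List.suffix_cons a L))
    have hmem : mk [a] • (lift σ (mk L) p : α) ∈ D := by
      rw [hp, smul_smul, ← hmk]
      exact hL _ List.suffix_rfl
    rw [hmk, _root_.map_mul, Equiv.Perm.mul_apply, mul_smul, ← hp]
    obtain ⟨b, _ | _⟩ := a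
    · have hinv : mk [(b, false)] = (of b)⁻¹ := rfl
      rw [hinv] at hmem ⊢
      rw [_root_.map_inv, lift_apply_of]
      exact (hσ b).2 _ hmem
    · exact (hσ b).1 _ hmem

/-- Marshall Hall's argument: the points reached along suffixes of the words in `W` form a finite
set on which each generator acts as a partial bijection; completing these to permutations gives a
finite action that agrees with the given one on `W`. -/
theorem exists_finiteIndex_mem_iff_smul_eq {β α : Type*} [MulAction (FreeGroup β) α]
    (p₀ : α) {W : Set (FreeGroup β)} (hW : W.Finite) :
    ∃ M : Subgroup (FreeGroup β), M.FiniteIndex ∧ ∀ w ∈ W, (w ∈ M ↔ w • p₀ = p₀) := by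
  classical
  set D : Set α := insert p₀ (⋃ w ∈ W, (fun s => mk s • p₀) '' {s | s <:+ toWord w})
  have : Finite D := by
    refine (Set.Finite.insert _ (hW.biUnion fun w _ => Set.Finite.image _ ?_)).to_subtype
    exact (toWord w).tails.finite_toSet.subset fun s hs => (List.mem_tails s _).mpr hs
  obtain ⟨φ, hφ⟩ := exists_hom_perm_mk_eq_smul (β := β) D
  let p : D := ⟨p₀, Set.mem_insert _ _⟩
  have hφW : ∀ w ∈ W, (φ w p : α) = w • p₀ := fun w hw => by
    simpa only [mk_toWord] using hφ (toWord w) p fun s hs =>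
      Set.mem_insert_of_mem _ (Set.mem_biUnion hw ⟨s, hs, rfl⟩)
  refine ⟨(MulAction.stabilizer _ p).comap φ, inferInstance, fun w hw => ?_⟩
  rw [mem_comap, MulAction.mem_stabilizer_iff, Equiv.Perm.smul_def, ← hφW w hw, Subtype.ext_iff]

theorem isSeparable_of_fg_s5 {β : Type*} {K : Subgroup (FreeGroup β)} (hK : K.FG) :
    K.IsSeparable_s5 := by
  intro x hx
  obtain ⟨S, rfl⟩ := hK
  obtain ⟨M, hM, hMW⟩ := exists_finiteIndex_mem_iff_smul_eq
    ((1 : FreeGroup β) : FreeGroup β ⧸ closure (S : Set (FreeGroup β)))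
    (Set.toFinite (insert x (S : Set (FreeGroup β))))
  have hstab : ∀ w, w • ((1 : FreeGroup β) : FreeGroup β ⧸ closure (S : Set (FreeGroup β))) =
      (1 : FreeGroup β) ↔ w ∈ closure (S : Set (FreeGroup β)) := fun w => by
    rw [← MulAction.mem_stabilizer_iff, MulAction.stabilizer_quotient]
  refine ⟨M, hM, closure_le _ |>.mpr fun s hs => ?_, fun hxM => hx ?_⟩
  · exact (hMW s (Set.mem_insert_of_mem _ hs)).mpr ((hstab s).mpr (subset_closure hs))
  · exact (hstab x).mp ((hMW x (Set.mem_insert _ _)).mp hxM)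

end FreeGroup

namespace Subgroup

variable {G : Type*} [Group G]

theorem isSeparable_of_fg_of_le {β : Type*} {F : Subgroup G} [F.FiniteIndex]
    (e : F ≃* FreeGroup β) {K : Subgroup G} (hK : K.FG) (hKF : K ≤ F) : K.IsSeparable_s5 := by
  have hsep : (K.subgroupOf F).IsSeparable_s5 := by
    simpa only [comap_map_eq_self_of_injective (f := e.toMonoidHom) e.injective] using
      (FreeGroup.isSeparable_of_fg_s5 ((hK.subgroupOf hKF).map e.toMonoidHom)).comap e.toMonoidHom
  simpa only [map_subgroupOf_eq_of_le hKF] using hsep.map_subtype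

theorem IsSeparable_s5.conj_smul_eq_self {A : Subgroup G} {t : G}
    (hsep : (MulAut.conj t • A).IsSeparable_s5) (hle : MulAut.conj t • A ≤ A) :
    MulAut.conj t • A = A := by
  refine le_antisymm hle fun x hxA => by_contra fun hx => ?_
  obtain ⟨M, _, hAM, hxM⟩ := hsep x hx
  -- `A ⊔ N` plays the role of the image of `A` in the finite quotient `G ⧸ N`.
  have hN : MulAut.conj t • M.normalCore = M.normalCore := Normal.conj_smul_eq_self ..
  have hL : MulAut.conj t • (A ⊔ M.normalCore) = A ⊔ M.normalCore :=
    smul_eq_of_smul_le_of_relIndex_ne_zero _ le_sup_right relIndex_ne_zero hN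
      (by rw [smul_sup, hN]; exact sup_le_sup_right hle _)
  have hLM : A ⊔ M.normalCore ≤ M := by
    rw [← hL, smul_sup, hN]
    exact sup_le hAM M.normalCore_le
  exact hxM (hLM (le_sup_left (a := A) hxA))

theorem FG.conj_smul_eq_self {β : Type*} {F : Subgroup G} [F.FiniteIndex] (e : F ≃* FreeGroup β)
    {H : Subgroup G} (hH : H.FG) {t : G} (hle : MulAut.conj t • H ≤ H) :
    MulAut.conj t • H = H := by
  have hA : (H ⊓ F.normalCore).relIndex H ≠ 0 := by
    rw [inf_relIndex_left]
    exact relIndex_ne_zero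
  have hAle : MulAut.conj t • (H ⊓ F.normalCore) ≤ H ⊓ F.normalCore := by
    rw [smul_inf, Normal.conj_smul_eq_self t F.normalCore]
    exact inf_le_inf_right _ hle
  have hsep : (MulAut.conj t • (H ⊓ F.normalCore)).IsSeparable_s5 :=
    isSeparable_of_fg_of_le e ((hH.of_le_of_relIndex_ne_zero inf_le_left hA).map _)
      (hAle.trans (inf_le_right.trans F.normalCore_le))
  exact smul_eq_of_smul_le_of_relIndex_ne_zero _ inf_le_left hA (hsep.conj_smul_eq_self hAle) hle

end Subgroup

section Conjugacy

variable {G : Type*} [Group G] {A B : Subgroup G}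

theorem conjInto_iff : ConjInto A B ↔ ∃ g : G, MulAut.conj g • A ≤ B := by
  refine ⟨fun ⟨g, hg⟩ => ⟨g⁻¹, ?_⟩, fun ⟨g, hg⟩ => ⟨g⁻¹, fun a ha => ?_⟩⟩
  · rintro _ ⟨a, ha, rfl⟩
    simpa using hg a ha
  · simpa using hg ⟨a, ha, rfl⟩

theorem conjSubgroups_iff : ConjSubgroups A B ↔ ∃ g : G, MulAut.conj g • A = B :=
  Iff.rfl

theorem ConjSubgroups.symm (h : ConjSubgroups A B) : ConjSubgroups B A := by
  obtain ⟨g, rfl⟩ := conjSubgroups_iff.mp h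
  refine conjSubgroups_iff.mpr ⟨g⁻¹, ?_⟩
  rw [smul_smul, ← map_mul, inv_mul_cancel, map_one, one_smul]

theorem ConjSubgroups.conjInto (h : ConjSubgroups A B) : ConjInto A B :=
  let ⟨g, hg⟩ := conjSubgroups_iff.mp h
  conjInto_iff.mpr ⟨g, hg.le⟩

theorem conjSubgroups_of_conjInto_of_conjInto {β : Type*} {F : Subgroup G} [F.FiniteIndex]
    (e : F ≃* FreeGroup β) (hA : A.FG) (hAB : ConjInto A B) (hBA : ConjInto B A) :
    ConjSubgroups B A := by
  obtain ⟨g, hg⟩ := conjInto_iff.mp hAB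
  obtain ⟨h, hh⟩ := conjInto_iff.mp hBA
  have hle : MulAut.conj (h * g) • A ≤ A := by
    rw [map_mul, mul_smul]
    exact (pointwise_smul_le_pointwise_smul_iff.mpr hg).trans hh
  refine conjSubgroups_iff.mpr ⟨h, le_antisymm hh ?_⟩
  calc A = MulAut.conj (h * g) • A := (hA.conj_smul_eq_self e hle).symm
    _ ≤ MulAut.conj h • B := by
      rw [map_mul, mul_smul]
      exact pointwise_smul_le_pointwise_smul_iff.mpr hg

end Conjugacy

theorem stmt5_general {G : Type*} [Group G]
    (hvf : ∃ (F : Subgroup G) (n : ℕ), F.index ≠ 0 ∧ Nonempty (F ≃* FreeGroup (Fin n)))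
    (hsics : SICS G) : SCS G := by
  obtain ⟨F, n, hF, ⟨e⟩⟩ := hvf
  have : F.FiniteIndex := ⟨hF⟩
  intro H₁ H₂ hH₁ hH₂ hne
  by_cases h₂₁ : ConjInto H₂ H₁
  · have h₁₂ : ¬ ConjInto H₁ H₂ := fun h₁₂ =>
      hne (conjSubgroups_of_conjInto_of_conjInto e hH₁ h₁₂ h₂₁).symm
    obtain ⟨Q, _, hQ, φ, hφ, hsep⟩ := hsics H₂ H₁ hH₂ hH₁ h₁₂
    exact ⟨Q, _, hQ, φ, hφ, fun h => hsep h.conjInto⟩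
  · obtain ⟨Q, _, hQ, φ, hφ, hsep⟩ := hsics H₁ H₂ hH₁ hH₂ h₂₁
    exact ⟨Q, _, hQ, φ, hφ, fun h => hsep h.symm.conjInto⟩

theorem stmt5 {G : Type*} [Group G] (hfg : Group.FG G)
    (hvf : ∃ (F : Subgroup G) (n : ℕ), F.index ≠ 0 ∧ Nonempty (F ≃* FreeGroup (Fin n)))
    (hsics : SICS G) : SCS G :=
  stmt5_general hvf hsics
end

section
/- Let G = G₁ * G₂ * ... * G_l * F be a free product of groups, and let H = ⟨h₁,...,h_r⟩ be a nontrivial finitely generated subgroup of G such that each generator hᵢ and each product hᵢhⱼ is conjugate into one of the factors G_k. Then H is conjugate into some single factor G_s. -/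
/-!
Write `ℓ` for the length of reduced words in the free product. If `g ≠ 1` lies in a factor, then
`ℓ (d g d⁻¹)` is odd: after absorbing into `g` the last letter of `d` when it lies in the same
factor, the word `d · g · d⁻¹` is reduced. Now let `a ∈ G_k` and `b ∈ G_m` be nontrivial. Replacing
`c` by a shortest element of its double coset `G_k c G_m` only conjugates `a` and `b` within their
factors, and then `a · c · b · c⁻¹` is a reduced word of even length unless `k = m` and
`c ∈ G_k`. So if `a c b c⁻¹` is conjugate into a factor, `c b c⁻¹` lies in `G_k`. Applied to a
generator `hᵢ₀ ≠ 1` and to each other generator `hⱼ`, this puts all of `H` into the conjugate of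
`G_s` containing `hᵢ₀`.
-/

open Monoid

/-- The canonical copy of the factor indexed by `i` inside the free product. -/
def factorCopy {ι : Type*} (K : ι → Type*) [∀ i, Group (K i)] (i : ι) :
    Subgroup (CoprodI K) :=
  (CoprodI.of (M := K) (i := i)).range

namespace Monoid.CoprodI

variable {ι : Type*} {K : ι → Type*} [∀ i, Group (K i)]

theorem Word.exists_prod_eq_mul_of_toList_eq_append (w : Word K) {L₁ L₂ : List (Σ i, K i)}
    (h : w.toList = L₁ ++ L₂) :
    ∃ w₁ w₂ : Word K, w₁.toList = L₁ ∧ w₂.toList = L₂ ∧ w.prod = w₁.prod * w₂.prod := by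
  have hne := w.ne_one
  have hchain := w.chain_ne
  rw [h] at hne hchain
  refine ⟨⟨L₁, fun l hl => hne l (List.mem_append_left _ hl), hchain.left_of_append⟩,
    ⟨L₂, fun l hl => hne l (List.mem_append_right _ hl), hchain.right_of_append⟩,
    rfl, rfl, ?_⟩
  simp only [Word.prod, h, List.map_append, List.prod_append]

theorem NeWord.length_toList_inv {i j : ι} (w : NeWord K i j) :
    w.inv.toList.length = w.toList.length := by
  induction w with
  | singleton => rfl
  | append _ _ _ ih₁ ih₂ =>
    simp only [NeWord.inv, NeWord.toList, List.length_append, ih₁, ih₂, add_comm]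

section WordLength

variable [DecidableEq ι] [∀ i, DecidableEq (K i)]

def wordLength (x : CoprodI K) : ℕ := (Word.equiv x).toList.length

theorem Word.wordLength_prod (w : Word K) : wordLength w.prod = w.toList.length :=
  congrArg (fun w : Word K => w.toList.length) (Word.equiv.apply_symm_apply w)

theorem NeWord.wordLength_prod {i j : ι} (w : NeWord K i j) :
    wordLength w.prod = w.toList.length :=
  Word.wordLength_prod w.toWord

theorem NeWord.prod_ne_one {i j : ι} (w : NeWord K i j) : w.prod ≠ 1 := by
  intro h
  have h0 := Word.wordLength_prod (Word.empty : Word K)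
  rw [Word.prod_empty, ← h, w.wordLength_prod] at h0
  exact w.toList_ne_nil (List.eq_nil_of_length_eq_zero h0)

theorem exists_neWord_prod_eq {x : CoprodI K} (hx : x ≠ 1) :
    ∃ (i j : ι) (w : NeWord K i j), w.prod = x := by
  have hw : Word.equiv x ≠ Word.empty := fun h => hx <| by
    rw [← Word.equiv.symm_apply_apply x, h]
    exact Word.prod_empty
  obtain ⟨i, j, w, hw⟩ := NeWord.of_word _ hw
  exact ⟨i, j, w, by rw [NeWord.prod, hw]; exact Word.equiv.symm_apply_apply x⟩

theorem NeWord.wordLength_inv_of_head_mul_prod_lt {i j : ι} (w : NeWord K i j) :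
    wordLength ((of w.head)⁻¹ * w.prod) < wordLength w.prod := by
  obtain ⟨L, hL⟩ := List.head?_eq_some_iff.1 w.toList_head?
  obtain ⟨w₁, w₂, h₁, h₂, hprod⟩ :=
    w.toWord.exists_prod_eq_mul_of_toList_eq_append (L₁ := [⟨i, w.head⟩]) hL
  have hw₁ : w₁.prod = of w.head := by simp [Word.prod, h₁]
  rw [w.wordLength_prod, NeWord.prod, hprod, hw₁, inv_mul_cancel_left, Word.wordLength_prod,
    h₂, hL, List.length_cons]
  exact Nat.lt_succ_self _

theorem NeWord.wordLength_prod_mul_inv_of_last_lt {i j : ι} (w : NeWord K i j) :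
    wordLength (w.prod * (of w.last)⁻¹) < wordLength w.prod := by
  obtain ⟨L, hL⟩ := List.getLast?_eq_some_iff.1 w.toList_getLast?
  obtain ⟨w₁, w₂, h₁, h₂, hprod⟩ :=
    w.toWord.exists_prod_eq_mul_of_toList_eq_append (L₂ := [⟨j, w.last⟩]) hL
  have hw₂ : w₂.prod = of w.last := by simp [Word.prod, h₂]
  rw [w.wordLength_prod, NeWord.prod, hprod, hw₂, mul_inv_cancel_right, Word.wordLength_prod,
    h₁, hL, List.length_append, List.length_singleton]
  exact Nat.lt_succ_self _

theorem exists_eq_mul_of_and_last_ne (d : CoprodI K) (n : ι) :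
    ∃ (d₀ : CoprodI K) (v : K n), d = d₀ * of v ∧
      (d₀ = 1 ∨ ∃ (i j : ι) (w : NeWord K i j), w.prod = d₀ ∧ j ≠ n) := by
  obtain ⟨v, hv⟩ : ∃ v : K n, ∀ v', wordLength (d * of v) ≤ wordLength (d * of v') :=
    ⟨_, fun v' => Function.argmin_le (fun v : K n => wordLength (d * of v)) v'⟩
  refine ⟨d * of v, v⁻¹, by simp, ?_⟩
  rcases eq_or_ne (d * of v) 1 with h | h
  · exact .inl h
  obtain ⟨i, j, w, hw⟩ := exists_neWord_prod_eq h
  refine .inr ⟨i, j, w, hw, ?_⟩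
  rintro rfl
  apply (hv (v * w.last⁻¹)).not_gt
  simpa [hw, mul_assoc] using w.wordLength_prod_mul_inv_of_last_lt

theorem exists_eq_of_mul_mul_of_and_ne (c : CoprodI K) (k m : ι) :
    ∃ (u : K k) (c₀ : CoprodI K) (v : K m), c = of u * c₀ * of v ∧
      (c₀ = 1 ∨ ∃ (i j : ι) (w : NeWord K i j), w.prod = c₀ ∧ i ≠ k ∧ j ≠ m) := by
  obtain ⟨⟨u, v⟩, huv⟩ : ∃ uv : K k × K m, ∀ uv' : K k × K m,
      wordLength (of uv.1 * c * of uv.2) ≤ wordLength (of uv'.1 * c * of uv'.2) :=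
    ⟨_, fun uv' =>
      Function.argmin_le (fun uv : K k × K m => wordLength (of uv.1 * c * of uv.2)) uv'⟩
  refine ⟨u⁻¹, of u * c * of v, v⁻¹, by simp [mul_assoc], ?_⟩
  rcases eq_or_ne (of u * c * of v) 1 with h | h
  · exact .inl h
  obtain ⟨i, j, w, hw⟩ := exists_neWord_prod_eq h
  refine .inr ⟨i, j, w, hw, ?_, ?_⟩
  · rintro rfl
    apply (huv (w.head⁻¹ * u, v)).not_gt
    simpa [hw, mul_assoc] using w.wordLength_inv_of_head_mul_prod_lt
  · rintro rfl
    apply (huv (u, v * w.last⁻¹)).not_gt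
    simpa [hw, mul_assoc] using w.wordLength_prod_mul_inv_of_last_lt

theorem odd_wordLength_mul_of_mul_inv {n : ι} {g : K n} (hg : g ≠ 1) (d : CoprodI K) :
    Odd (wordLength (d * of g * d⁻¹)) := by
  obtain ⟨d₀, v, rfl, hd₀⟩ := exists_eq_mul_of_and_last_ne d n
  have hg' : v * g * v⁻¹ ≠ 1 := by simpa using hg
  have hconj : d₀ * of v * of g * (d₀ * of v)⁻¹ = d₀ * of (v * g * v⁻¹) * d₀⁻¹ := by
    simp only [map_mul, map_inv]; group
  rw [hconj]
  rcases hd₀ with rfl | ⟨i, j, w, rfl, hj⟩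
  · rw [one_mul, inv_one, mul_one, ← NeWord.prod_singleton _ hg', NeWord.wordLength_prod]
    exact odd_one
  · let W := (w.append hj (NeWord.singleton _ hg')).append hj.symm w.inv
    have hW : W.prod = w.prod * of (v * g * v⁻¹) * w.prod⁻¹ := by
      simp [W, NeWord.append_prod, NeWord.inv_prod]
    rw [← hW, W.wordLength_prod]
    exact ⟨w.toList.length, by simp [W, NeWord.length_toList_inv]; ring⟩

end WordLength

theorem NeWord.conj_prod_notMem_factorCopy {i j : ι} (w : NeWord K i j)
    (hw : Even w.toList.length) (d : CoprodI K) (n : ι) :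
    d⁻¹ * w.prod * d ∉ factorCopy K n := by
  classical
  rintro ⟨g, hg⟩
  have hw' : w.prod = d * of g * d⁻¹ := by rw [hg]; group
  rcases eq_or_ne g 1 with rfl | hg1
  · exact w.prod_ne_one (by simpa using hw')
  · have hodd := odd_wordLength_mul_of_mul_inv hg1 d
    rw [← hw', w.wordLength_prod] at hodd
    exact Nat.not_even_iff_odd.2 hodd hw

theorem eq_and_mem_factorCopy_of_conj_mul_conj_mem {k m n : ι} {a : K k} {b : K m}
    (ha : a ≠ 1) (hb : b ≠ 1) {c d : CoprodI K}
    (h : d⁻¹ * (of a * (c * of b * c⁻¹)) * d ∈ factorCopy K n) :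
    k = m ∧ c ∈ factorCopy K k := by
  classical
  obtain ⟨u, c₀, v, rfl, hc₀⟩ := exists_eq_of_mul_mul_of_and_ne c k m
  have ha' : u⁻¹ * a * u ≠ 1 := by rwa [Ne, mul_assoc, inv_mul_eq_one, right_eq_mul]
  have hb' : v * b * v⁻¹ ≠ 1 := by simpa using hb
  have hconj : d⁻¹ * (of a * (of u * c₀ * of v * of b * (of u * c₀ * of v)⁻¹)) * d =
      (of u⁻¹ * d)⁻¹ * (of (u⁻¹ * a * u) * c₀ * of (v * b * v⁻¹) * c₀⁻¹) * (of u⁻¹ * d) := by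
    simp only [map_mul, map_inv]; group
  rw [hconj] at h
  rcases hc₀ with rfl | ⟨i, j, w, rfl, hi, hj⟩
  · by_cases hkm : k = m
    · subst hkm
      exact ⟨rfl, ⟨u * v, by simp⟩⟩
    · let W := (NeWord.singleton _ ha').append hkm (NeWord.singleton _ hb')
      refine (W.conj_prod_notMem_factorCopy even_two (of u⁻¹ * d) n ?_).elim
      simpa [W] using h
  · let W := (((NeWord.singleton _ ha').append hi.symm w).append hj
      (NeWord.singleton _ hb')).append hj.symm w.inv
    refine (W.conj_prod_notMem_factorCopy ⟨w.toList.length + 1, ?_⟩ (of u⁻¹ * d) n ?_).elim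
    · simp [W, NeWord.length_toList_inv]; ring
    · simpa [W, mul_assoc] using h

theorem eq_and_conj_mem_factorCopy_of_mul_mem {x y g g' d : CoprodI K} {k m n : ι}
    (hx : g⁻¹ * x * g ∈ factorCopy K k) (hx1 : x ≠ 1)
    (hy : g'⁻¹ * y * g' ∈ factorCopy K m) (hy1 : y ≠ 1)
    (hxy : d⁻¹ * (x * y) * d ∈ factorCopy K n) :
    k = m ∧ g⁻¹ * y * g ∈ factorCopy K k := by
  obtain ⟨a, ha⟩ := hx
  obtain ⟨b, hb⟩ := hy
  have hx' : x = g * of a * g⁻¹ := by rw [ha]; group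
  have hy' : y = g' * of b * g'⁻¹ := by rw [hb]; group
  have ha1 : a ≠ 1 := by rintro rfl; simp [hx'] at hx1
  have hb1 : b ≠ 1 := by rintro rfl; simp [hy'] at hy1
  have hconj : (g⁻¹ * d)⁻¹ * (of a * (g⁻¹ * g' * of b * (g⁻¹ * g')⁻¹)) * (g⁻¹ * d) =
      d⁻¹ * (x * y) * d := by
    rw [hx', hy']; group
  obtain ⟨rfl, hc⟩ := eq_and_mem_factorCopy_of_conj_mul_conj_mem ha1 hb1 (hconj ▸ hxy)
  refine ⟨rfl, ?_⟩
  have hy'' : g⁻¹ * y * g = g⁻¹ * g' * of b * (g⁻¹ * g')⁻¹ := by rw [hy']; group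
  rw [hy'']
  exact mul_mem (mul_mem hc ⟨b, rfl⟩) (inv_mem hc)

end Monoid.CoprodI

/-- Lemma 3.2: in a free product `G₁ * ⋯ * G_l * F`, if a nontrivial finitely generated
subgroup `H = ⟨h₁,…,h_r⟩` is such that each `hᵢ` and each `hᵢhⱼ` is conjugate into one of
the factors `G_k`, then `H` is conjugate into a single factor `G_s`. -/
theorem stmt8 (l : ℕ) (K : Option (Fin l) → Type*) [∀ i, Group (K i)]
    (r : ℕ) (h : Fin r → CoprodI K)
    (hne : Subgroup.closure (Set.range h) ≠ ⊥)
    (h1 : ∀ i, ∃ (k : Fin l) (g : CoprodI K),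
      g⁻¹ * h i * g ∈ factorCopy K (some k))
    (h2 : ∀ i j, ∃ (k : Fin l) (g : CoprodI K),
      g⁻¹ * (h i * h j) * g ∈ factorCopy K (some k)) :
    ∃ (s : Fin l) (g : CoprodI K),
      ∀ a ∈ Subgroup.closure (Set.range h), g⁻¹ * a * g ∈ factorCopy K (some s) := by
  obtain ⟨i₀, hi₀⟩ : ∃ i₀, h i₀ ≠ 1 := by
    by_contra! hall
    exact hne (Subgroup.closure_eq_bot_iff.2 (Set.range_subset_iff.2 hall))
  obtain ⟨s, g, hg⟩ := h1 i₀
  have hgen (j : Fin r) : g⁻¹ * h j * g ∈ factorCopy K (some s) := by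
    rcases eq_or_ne (h j) 1 with hj | hj
    · simp [hj]
    obtain ⟨_, g', hg'⟩ := h1 j
    obtain ⟨_, d, hd⟩ := h2 i₀ j
    exact (CoprodI.eq_and_conj_mem_factorCopy_of_mul_mem hg hi₀ hg' hj hd).2
  refine ⟨s, g, fun a ha => ?_⟩
  have hle : Subgroup.closure (Set.range h) ≤
      (factorCopy K (some s)).comap (MulAut.conj g⁻¹).toMonoidHom :=
    (Subgroup.closure_le _).2 (Set.range_subset_iff.2 fun j => by simpa using hgen j)
  simpa using hle ha
end

section
/- Every finitely generated subgroup of a free group of finite rank is contained, as a free factor, in a subgroup of finite index. That is, for any finitely generated H ≤ F (F free of finite rank), there exists a finite-index subgroup D ≤ F and a subgroup L ≤ D with D = H * L (internal free product). -/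
/-!
Write `X = F ⧸ H` and let `C ⊆ X` consist of the cosets `u • H` of the suffixes `u` of the reduced
words of a finite generating set of `H`. Each letter `x` acts on `C` as a partial injection;
extending these to permutations `σ x` of the finite set `C` gives an action of `F` whose stabilizer
`D` of the base coset has finite index, and `H ≤ D` because every generator of `H` travels inside
`C`.

Pick for each `v ∈ C` a word `t v` travelling inside `C` from the base coset to `v`. The Schreier
generators `γ (v, x) = (t (σ x v))⁻¹ x (t v)` of the edges on which `σ x` is the true action
generate `H`; the remaining ones generate `L`. Recording the edges crossed by a loop at the base
point is a homomorphism `D → F(C × α)`, and following it by `of e ↦ γ e ∈ H ∗ L` gives a left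
inverse of the multiplication map `H ∗ L → D`, which is therefore an isomorphism.
-/

open Function Subgroup
open scoped Monoid.Coprod

theorem Monoid.Coprod.lift_subtype_injective {G : Type*} [Group G] {H L D : Subgroup G}
    (hH : H ≤ D) (hL : L ≤ D) (θ : D →* H ∗ L) (hθH : θ.comp (inclusion hH) = inl)
    (hθL : θ.comp (inclusion hL) = inr) : Injective (lift H.subtype L.subtype) := by
  have hθ : θ.comp (lift (inclusion hH) (inclusion hL)) = MonoidHom.id _ := by
    apply hom_ext
    · rw [MonoidHom.comp_assoc, lift_comp_inl, hθH, MonoidHom.id_comp]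
    · rw [MonoidHom.comp_assoc, lift_comp_inr, hθL, MonoidHom.id_comp]
  have hfac : lift H.subtype L.subtype = D.subtype.comp (lift (inclusion hH) (inclusion hL)) := by
    ext <;> rfl
  rw [hfac]
  exact D.subtype_injective.comp (LeftInverse.injective (g := θ) (DFunLike.congr_fun hθ))

theorem Set.Finite.exists_perm_smul_eq {G X : Type*} [Group G] [MulAction G X] {C : Set X}
    (hC : C.Finite) (g : G) :
    ∃ τ : Equiv.Perm C, ∀ v : C, g • (v : X) ∈ C → (τ v : X) = g • (v : X) := by
  classical
  have := hC.to_subtype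
  let e : {v : C // g • (v : X) ∈ C} ≃ {w : C // g⁻¹ • (w : X) ∈ C} :=
    { toFun := fun v => ⟨⟨g • (v : X), v.2⟩, by simp [v.1.2]⟩
      invFun := fun w => ⟨⟨g⁻¹ • (w : X), w.2⟩, by simp [w.1.2]⟩
      left_inv := fun v => by simp
      right_inv := fun w => by simp }
  exact ⟨e.extendSubtype, fun v hv => by rw [e.extendSubtype_apply_of_mem v hv]; rfl⟩

namespace FreeGroup

section EdgePath

variable {α V : Type*} (σ : α → Equiv.Perm V)

def edgePathStep (x : α) : Equiv.Perm (V × FreeGroup (V × α)) where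
  toFun p := (σ x p.1, of (p.1, x) * p.2)
  invFun p := ((σ x).symm p.1, (of ((σ x).symm p.1, x))⁻¹ * p.2)
  left_inv := by rintro ⟨v, w⟩; simp
  right_inv := by rintro ⟨v, w⟩; simp

/-- The edges `(u, x)` crossed by the path that starts at `v` and reads `g` from right to left,
accumulated in the second coordinate of the action `edgePathStep` of the letters. -/
def edgePath (v : V) (g : FreeGroup α) : FreeGroup (V × α) :=
  (lift (edgePathStep σ) g (v, 1)).2

theorem lift_edgePathStep_apply (g : FreeGroup α) (v : V) (w : FreeGroup (V × α)) :
    lift (edgePathStep σ) g (v, w) = (lift σ g v, edgePath σ v g * w) := by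
  induction g using FreeGroup.induction_on generalizing v w with
  | C1 => simp [edgePath]
  | of x => simp [edgePath, edgePathStep]
  | inv_of x _ => simp [edgePath, edgePathStep]
  | mul g h ihg ihh =>
    have hψ : edgePath σ v (g * h) = edgePath σ (lift σ h v) g * edgePath σ v h := by
      rw [edgePath, _root_.map_mul, Equiv.Perm.mul_apply, ihh, ihg, mul_one]
    rw [_root_.map_mul, Equiv.Perm.mul_apply, ihh, ihg, hψ, _root_.map_mul, Equiv.Perm.mul_apply,
      mul_assoc]

variable {σ} in
theorem edgePath_mul (v : V) (g h : FreeGroup α) :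
    edgePath σ v (g * h) = edgePath σ (lift σ h v) g * edgePath σ v h := by
  rw [edgePath, _root_.map_mul, Equiv.Perm.mul_apply, lift_edgePathStep_apply,
    lift_edgePathStep_apply, mul_one]

@[simp]
theorem edgePath_one (v : V) : edgePath σ v 1 = 1 := by
  simp [edgePath]

@[simp]
theorem edgePath_of (v : V) (x : α) : edgePath σ v (of x) = of (v, x) := by
  simp [edgePath, edgePathStep]

theorem edgePath_inv (v : V) (g : FreeGroup α) :
    edgePath σ v g⁻¹ = (edgePath σ (lift σ g⁻¹ v) g)⁻¹ := by
  refine eq_inv_of_mul_eq_one_right ?_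
  rw [← edgePath_mul, mul_inv_cancel, edgePath_one]

def schreierGen (t : V → FreeGroup α) (e : V × α) : FreeGroup α :=
  (t (σ e.2 e.1))⁻¹ * of e.2 * t e.1

theorem lift_schreierGen_edgePath (t : V → FreeGroup α) (v : V) (g : FreeGroup α) :
    lift (schreierGen σ t) (edgePath σ v g) = (t (lift σ g v))⁻¹ * g * t v := by
  induction g using FreeGroup.induction_on generalizing v with
  | C1 => simp
  | of x => simp [schreierGen]
  | inv_of x _ => simp [edgePath_inv, schreierGen, mul_assoc]
  | mul g h ihg ihh =>
    rw [edgePath_mul, _root_.map_mul, ihg, ihh, _root_.map_mul, Equiv.Perm.mul_apply]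
    group

def liftStabilizer (v : V) : Subgroup (FreeGroup α) :=
  (MulAction.stabilizer (Equiv.Perm V) v).comap (lift σ)

theorem mem_liftStabilizer {v : V} {g : FreeGroup α} :
    g ∈ liftStabilizer σ v ↔ lift σ g v = v :=
  Iff.rfl

theorem liftStabilizer_index_ne_zero [Finite V] (v : V) : (liftStabilizer σ v).index ≠ 0 :=
  (finiteIndex_of_le (H := (lift σ).ker) fun g hg => by
    rw [MonoidHom.mem_ker] at hg
    rw [mem_liftStabilizer, hg, Equiv.Perm.one_apply]).index_ne_zero

def edgePathHom (v : V) : liftStabilizer σ v →* FreeGroup (V × α) where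
  toFun g := edgePath σ v g
  map_one' := edgePath_one σ v
  map_mul' g h := by
    rw [Subgroup.coe_mul, edgePath_mul, (mem_liftStabilizer σ).1 h.2]

variable {σ} {t : V → FreeGroup α} {v₀ : V}

theorem lift_inv_apply_eq (ht : ∀ v, lift σ (t v) v₀ = v) (v : V) :
    lift σ (t v)⁻¹ v = v₀ := by
  rw [_root_.map_inv, Equiv.Perm.inv_eq_iff_eq, ht]

theorem schreierGen_mem_liftStabilizer (ht : ∀ v, lift σ (t v) v₀ = v) (e : V × α) :
    schreierGen σ t e ∈ liftStabilizer σ v₀ := by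
  rw [mem_liftStabilizer, schreierGen, _root_.map_mul, _root_.map_mul, Equiv.Perm.mul_apply,
    Equiv.Perm.mul_apply, ht, lift_apply_of, lift_inv_apply_eq ht]

theorem edgePath_schreierGen (ht : ∀ v, lift σ (t v) v₀ = v) (e : V × α) :
    edgePath σ v₀ (schreierGen σ t e) =
      (edgePath σ v₀ (t (σ e.2 e.1)))⁻¹ * of e * edgePath σ v₀ (t e.1) := by
  rw [schreierGen, edgePath_mul, edgePath_mul, edgePath_inv, ht, edgePath_of, lift_apply_of,
    lift_inv_apply_eq ht]

end EdgePath

section LiftSplit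

variable {E G : Type*} [Group G] (γ : E → G) (p : Set E)

open Classical in
noncomputable def liftSplit : FreeGroup E →* closure (γ '' p) ∗ closure (γ '' pᶜ) :=
  lift fun e =>
    if h : e ∈ p then Monoid.Coprod.inl ⟨γ e, subset_closure (Set.mem_image_of_mem γ h)⟩
    else Monoid.Coprod.inr ⟨γ e, subset_closure (Set.mem_image_of_mem γ h)⟩

theorem liftSplit_of_mem {e : E} (he : e ∈ p) :
    liftSplit γ p (of e) =
      Monoid.Coprod.inl ⟨γ e, subset_closure (Set.mem_image_of_mem γ he)⟩ := by
  simp [liftSplit, he]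

theorem liftSplit_of_notMem {e : E} (he : e ∉ p) :
    liftSplit γ p (of e) =
      Monoid.Coprod.inr ⟨γ e, subset_closure (Set.mem_image_of_mem γ he)⟩ := by
  simp [liftSplit, he]

theorem coprodLift_comp_liftSplit :
    (Monoid.Coprod.lift (closure (γ '' p)).subtype (closure (γ '' pᶜ)).subtype).comp
      (liftSplit γ p) = lift γ := by
  ext e
  by_cases he : e ∈ p
  · simp [liftSplit_of_mem γ p he]
  · simp [liftSplit_of_notMem γ p he]

theorem liftSplit_eq_one {w : FreeGroup E} (hw : w ∈ closure (of '' p)) (h1 : lift γ w = 1) :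
    liftSplit γ p w = 1 := by
  have hinl : closure (of '' p) ≤ (Monoid.Coprod.inl.range).comap (liftSplit γ p) := by
    rw [closure_le]
    rintro _ ⟨e, he, rfl⟩
    exact ⟨_, (liftSplit_of_mem γ p he).symm⟩
  obtain ⟨a, ha⟩ := hinl hw
  rw [← coprodLift_comp_liftSplit γ p, MonoidHom.comp_apply, ← ha,
    Monoid.Coprod.lift_apply_inl] at h1
  rw [← ha, show a = 1 from Subtype.ext h1, _root_.map_one]

end LiftSplit

theorem mem_closure_schreierGen_of_edgePath_mem {α V : Type*} {σ : α → Equiv.Perm V} {v₀ : V}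
    {t : V → FreeGroup α} (ht₀ : t v₀ = 1) {p : Set (V × α)} {g : FreeGroup α}
    (hg : g ∈ liftStabilizer σ v₀) (hgp : edgePath σ v₀ g ∈ closure (of '' p)) :
    g ∈ closure (schreierGen σ t '' p) := by
  have hlift := lift_schreierGen_edgePath σ t v₀ g
  rw [(mem_liftStabilizer σ).1 hg, ht₀, inv_one, one_mul, mul_one] at hlift
  have himage : lift (schreierGen σ t) '' (of '' p) = schreierGen σ t '' p := by
    rw [Set.image_image]
    simp only [lift_apply_of]
  rw [← hlift, ← himage, ← MonoidHom.map_closure]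
  exact mem_map_of_mem _ hgp

theorem lift_closure_schreierGen_injective_and_range {α V : Type*} (σ : α → Equiv.Perm V)
    {v₀ : V} {t : V → FreeGroup α} (ht₀ : t v₀ = 1) (ht : ∀ v, lift σ (t v) v₀ = v)
    {p : Set (V × α)} (htp : ∀ v, edgePath σ v₀ (t v) ∈ closure (of '' p)) :
    Injective (Monoid.Coprod.lift (closure (schreierGen σ t '' p)).subtype
        (closure (schreierGen σ t '' pᶜ)).subtype) ∧
      (Monoid.Coprod.lift (closure (schreierGen σ t '' p)).subtype
        (closure (schreierGen σ t '' pᶜ)).subtype).range = liftStabilizer σ v₀ := by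
  set γ := schreierGen σ t
  have hγ : ∀ e, γ e ∈ liftStabilizer σ v₀ := schreierGen_mem_liftStabilizer ht
  have hle : ∀ q : Set (V × α), closure (γ '' q) ≤ liftStabilizer σ v₀ := fun q =>
    (closure_le _).2 (Set.image_subset_iff.2 fun e _ => hγ e)
  set θ := (liftSplit γ p).comp (edgePathHom σ v₀)
  -- Paths along the transversal only cross edges of `p` and map to `1`, so they vanish under `θ`.
  have hθγ : ∀ e, θ ⟨γ e, hγ e⟩ = liftSplit γ p (of e) := by
    have hpath : ∀ v, liftSplit γ p (edgePath σ v₀ (t v)) = 1 := fun v =>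
      liftSplit_eq_one γ p (htp v) (by rw [lift_schreierGen_edgePath, ht, ht₀]; group)
    intro e
    change liftSplit γ p (edgePath σ v₀ (schreierGen σ t e)) = _
    rw [edgePath_schreierGen ht, _root_.map_mul, _root_.map_mul, _root_.map_inv, hpath, hpath,
      inv_one, one_mul, mul_one]
  have hθH : θ.comp (inclusion (hle p)) = Monoid.Coprod.inl := by
    refine MonoidHom.eq_of_eqOn_dense closure_closure_coe_preimage ?_
    rintro ⟨_, hx⟩ ⟨e, he, rfl⟩
    exact (hθγ e).trans (liftSplit_of_mem γ p he)
  have hθL : θ.comp (inclusion (hle pᶜ)) = Monoid.Coprod.inr := by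
    refine MonoidHom.eq_of_eqOn_dense closure_closure_coe_preimage ?_
    rintro ⟨_, hx⟩ ⟨e, he, rfl⟩
    exact (hθγ e).trans (liftSplit_of_notMem γ p he)
  refine ⟨Monoid.Coprod.lift_subtype_injective (hle p) (hle pᶜ) θ hθH hθL,
    le_antisymm ?_ ?_⟩
  · rw [Monoid.Coprod.range_lift, range_subtype, range_subtype]
    exact sup_le (hle p) (hle pᶜ)
  · intro g hg
    refine ⟨θ ⟨g, hg⟩, ?_⟩
    rw [MonoidHom.comp_apply, ← MonoidHom.comp_apply, coprodLift_comp_liftSplit]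
    change lift γ (edgePath σ v₀ g) = g
    rw [lift_schreierGen_edgePath, (mem_liftStabilizer σ).1 hg, ht₀]
    group

section Action

variable {α X : Type*} [MulAction (FreeGroup α) X] {C : Set X} {σ : α → Equiv.Perm C}

/-- The edges of the Stallings graph of `C`; the other edges of `C × α` are the ones added when the
partial action on `C` is completed to permutations. -/
def coreEdges (C : Set X) : Set (C × α) := {e | of e.2 • (e.1 : X) ∈ C}

theorem lift_mk_singleton_apply
    (hσ : ∀ x (v : C), of x • (v : X) ∈ C → (σ x v : X) = of x • (v : X))
    (a : α × Bool) (v : C) (h : mk [a] • (v : X) ∈ C) :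
    lift σ (mk [a]) v = ⟨mk [a] • (v : X), h⟩ ∧
      edgePath σ v (mk [a]) ∈ closure (of '' coreEdges C) := by
  obtain ⟨x, _ | _⟩ := a
  · change (of x)⁻¹ • (v : X) ∈ C at h
    change lift σ (of x)⁻¹ v = ⟨(of x)⁻¹ • (v : X), h⟩ ∧
      edgePath σ v (of x)⁻¹ ∈ _
    set u : C := ⟨(of x)⁻¹ • (v : X), h⟩
    have hu : of x • (u : X) ∈ C := by simp [u]
    have hσu : σ x u = v := Subtype.ext (by rw [hσ x u hu]; simp [u])
    have hlift : lift σ (of x)⁻¹ v = u := by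
      rw [_root_.map_inv, lift_apply_of, Equiv.Perm.inv_eq_iff_eq, hσu]
    refine ⟨hlift, ?_⟩
    rw [edgePath_inv, hlift, edgePath_of]
    exact inv_mem (subset_closure ⟨(u, x), hu, rfl⟩)
  · exact ⟨Subtype.ext (hσ x v h), subset_closure ⟨(v, x), h, rfl⟩⟩

theorem lift_mk_apply_of_suffix_mem
    (hσ : ∀ x (v : C), of x • (v : X) ∈ C → (σ x v : X) = of x • (v : X)) (v₀ : C)
    {l : List (α × Bool)} (hl : ∀ l', l' <:+ l → mk l' • (v₀ : X) ∈ C) :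
    lift σ (mk l) v₀ = ⟨mk l • (v₀ : X), hl l List.suffix_rfl⟩ ∧
      edgePath σ v₀ (mk l) ∈ closure (of '' coreEdges C) := by
  induction l with
  | nil => simp [← one_eq_mk]
  | cons a l ih =>
    obtain ⟨hlift, hpath⟩ := ih fun l' h => hl l' (h.trans (List.suffix_cons a l))
    have hmk : mk (a :: l) = mk [a] * mk l := rfl
    have hal := hl (a :: l) List.suffix_rfl
    rw [hmk, mul_smul] at hal
    obtain ⟨hstep, hstepPath⟩ :=
      lift_mk_singleton_apply hσ a ⟨_, hl l (List.suffix_cons a l)⟩ hal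
    have hlift' : lift σ (mk (a :: l)) v₀ = ⟨_, hal⟩ := by
      rw [hmk, _root_.map_mul, Equiv.Perm.mul_apply, hlift, hstep]
    refine ⟨hlift'.trans (Subtype.ext ?_), ?_⟩
    · change _ = mk (a :: l) • (v₀ : X)
      rw [hmk, mul_smul]
    · rw [hmk, edgePath_mul, hlift]
      exact mul_mem hstepPath hpath

theorem schreierGen_mem_stabilizer
    (hσ : ∀ x (v : C), of x • (v : X) ∈ C → (σ x v : X) = of x • (v : X))
    {t : C → FreeGroup α} {x₀ : X} (ht : ∀ v : C, t v • x₀ = v) {e : C × α}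
    (he : e ∈ coreEdges C) : schreierGen σ t e ∈ MulAction.stabilizer (FreeGroup α) x₀ := by
  obtain ⟨v, x⟩ := e
  rw [MulAction.mem_stabilizer_iff, schreierGen, mul_smul, mul_smul, ht, ← hσ x v he,
    inv_smul_eq_iff, ht]

theorem closure_schreierGen_coreEdges_eq_stabilizer
    (hσ : ∀ x (v : C), of x • (v : X) ∈ C → (σ x v : X) = of x • (v : X)) {v₀ : C}
    {t : C → FreeGroup α} (ht₀ : t v₀ = 1) (ht : ∀ v : C, t v • (v₀ : X) = v)
    {S : Set (FreeGroup α)} (hS : closure S = MulAction.stabilizer (FreeGroup α) (v₀ : X))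
    (hSC : ∀ s ∈ S, ∃ l, (∀ l', l' <:+ l → mk l' • (v₀ : X) ∈ C) ∧ mk l = s) :
    closure (schreierGen σ t '' coreEdges C) =
      MulAction.stabilizer (FreeGroup α) (v₀ : X) := by
  refine le_antisymm ((closure_le _).2 ?_) (hS ▸ (closure_le _).2 ?_)
  · rintro _ ⟨e, he, rfl⟩
    exact schreierGen_mem_stabilizer hσ ht he
  · intro s hs
    obtain ⟨l, hl, rfl⟩ := hSC s hs
    obtain ⟨hlift, hpath⟩ := lift_mk_apply_of_suffix_mem hσ v₀ hl
    have hsv₀ : mk l • (v₀ : X) = v₀ :=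
      (hS ▸ subset_closure hs : mk l ∈ MulAction.stabilizer _ _)
    exact mem_closure_schreierGen_of_edgePath_mem ht₀
      ((mem_liftStabilizer σ).2 (hlift.trans (Subtype.ext hsv₀))) hpath

theorem exists_freeFactor_stabilizer (x₀ : X) {H : Subgroup (FreeGroup α)}
    (hH : MulAction.stabilizer (FreeGroup α) x₀ = H) {W : Set (List (α × Bool))}
    (hW : W.Finite) (hnil : [] ∈ W) (hsuffix : ∀ l ∈ W, ∀ l', l' <:+ l → l' ∈ W)
    {S : Set (FreeGroup α)} (hS : closure S = H) (hSW : S ⊆ mk '' W) :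
    ∃ D L : Subgroup (FreeGroup α), D.index ≠ 0 ∧ H ≤ D ∧ L ≤ D ∧
      Injective (Monoid.Coprod.lift H.subtype L.subtype) ∧
      (Monoid.Coprod.lift H.subtype L.subtype).range = D := by
  classical
  subst hH
  set C : Set X := (fun l => mk l • x₀) '' W
  have hWC : ∀ l ∈ W, ∀ l', l' <:+ l → mk l' • x₀ ∈ C := fun l hl l' h =>
    ⟨l', hsuffix l hl l' h, rfl⟩
  have : Finite C := (hW.image _).to_subtype
  choose σ hσ using fun x : α => (Set.toFinite C).exists_perm_smul_eq (of x)
  let v₀ : C := ⟨x₀, [], hnil, one_smul _ _⟩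
  -- The base point gets the empty word, so that `t v₀ = 1`.
  have hword : ∀ v : C, ∃ l ∈ W, mk l • x₀ = v ∧ (v = v₀ → l = []) := by
    rintro ⟨v, l, hl, rfl⟩
    by_cases hv : (⟨mk l • x₀, l, hl, rfl⟩ : C) = v₀
    · exact ⟨[], hnil, (one_smul _ x₀).trans (congrArg Subtype.val hv).symm, fun _ => rfl⟩
    · exact ⟨l, hl, rfl, fun h => absurd h hv⟩
  choose w hwW hw hw₀ using hword
  set t : C → FreeGroup α := fun v => mk (w v)
  have ht₀ : t v₀ = 1 := by simp [t, hw₀ v₀ rfl, one_eq_mk]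
  have hpath := fun v => lift_mk_apply_of_suffix_mem hσ v₀ (hWC _ (hwW v))
  have ht : ∀ v, lift σ (t v) v₀ = v := fun v => (hpath v).1.trans (Subtype.ext (hw v))
  obtain ⟨hinj, hrange⟩ :=
    lift_closure_schreierGen_injective_and_range σ ht₀ ht (p := coreEdges C) fun v => (hpath v).2
  rw [closure_schreierGen_coreEdges_eq_stabilizer hσ ht₀ hw hS fun s hs => by
    obtain ⟨l, hl, rfl⟩ := hSW hs
    exact ⟨l, hWC l hl, rfl⟩] at hinj hrange
  exact ⟨_, _, liftStabilizer_index_ne_zero σ v₀,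
    fun g hg => hrange ▸ ⟨Monoid.Coprod.inl ⟨g, hg⟩, rfl⟩,
    fun g hg => hrange ▸ ⟨Monoid.Coprod.inr ⟨g, hg⟩, rfl⟩, hinj, hrange⟩

end Action

end FreeGroup

theorem Subgroup.FG.exists_freeFactor_index_ne_zero {α : Type*} {H : Subgroup (FreeGroup α)}
    (hH : H.FG) :
    ∃ D L : Subgroup (FreeGroup α), D.index ≠ 0 ∧ H ≤ D ∧ L ≤ D ∧
      Injective (Monoid.Coprod.lift H.subtype L.subtype) ∧
      (Monoid.Coprod.lift H.subtype L.subtype).range = D := by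
  classical
  obtain ⟨S, hS, hSfin⟩ := (Subgroup.fg_iff H).1 hH
  refine FreeGroup.exists_freeFactor_stabilizer ((1 : FreeGroup α) : FreeGroup α ⧸ H)
    (MulAction.stabilizer_quotient H) (W := insert [] (⋃ s ∈ S, {l | l <:+ s.toWord}))
    ((hSfin.biUnion fun s _ => s.toWord.tails.finite_toSet.subset fun l hl =>
      (List.mem_tails _ _).2 hl).insert [])
    (Set.mem_insert _ _) ?_ hS
    fun s hs => ⟨s.toWord, Set.mem_insert_of_mem _ (Set.mem_biUnion hs List.suffix_rfl),
      FreeGroup.mk_toWord⟩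
  rintro l (rfl | hl) l' hl'
  · exact List.suffix_nil.1 hl' ▸ Set.mem_insert _ _
  · obtain ⟨s, hs, hls⟩ := Set.mem_iUnion₂.1 hl
    exact Set.mem_insert_of_mem _ (Set.mem_biUnion hs (hl'.trans hls))

/-- M. Hall's theorem: every finitely generated subgroup `H` of a free group of finite
rank is a free factor of some subgroup `D` of finite index: `D = H * L` internally,
i.e. the natural map from the coproduct `H ∗ L` to `F` is injective with range `D`. -/
theorem stmt10 (n : ℕ) (H : Subgroup (FreeGroup (Fin n))) (hH : H.FG) :
    ∃ (D L : Subgroup (FreeGroup (Fin n))), D.index ≠ 0 ∧ H ≤ D ∧ L ≤ D ∧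
      Function.Injective (Monoid.Coprod.lift H.subtype L.subtype) ∧
      (Monoid.Coprod.lift H.subtype L.subtype).range = D :=
  hH.exists_freeFactor_index_ne_zero
end

section
/- Let G be a group, F a normal subgroup of finite index, H a subgroup, and x ∈ G. Suppose H < x⁻¹Hx (strict containment). Then the chain (H ∩ F) ≤ x⁻¹(H ∩ F)x ≤ x⁻²(H ∩ F)x² ≤ ... is also strictly ascending, i.e., for every n, x⁻ⁿ(H∩F)xⁿ < x⁻⁽ⁿ⁺¹⁾(H∩F)x⁽ⁿ⁺¹⁾. -/
/-- The conjugate subgroup `A^g = g⁻¹ A g`. -/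
def conjSub {G : Type*} [Group G] (g : G) (A : Subgroup G) : Subgroup G :=
  Subgroup.map (MulAut.conj g⁻¹).toMonoidHom A

/-!
Conjugation by `x` preserves the index of `F` in any subgroup, so `[H^x : H^x ∩ F] = [H : H ∩ F]`,
a finite number. If `H ∩ F = H^x ∩ F` while `H < H^x`, then multiplicativity of indices in
`H ∩ F ≤ H < H^x` would force `[H^x : H] = 1`. Hence `H ∩ F < (H ∩ F)^x`, and conjugating
by `xⁿ` propagates this to every step of the chain.
-/

namespace Subgroup

variable {G : Type*} [Group G]

theorem inf_lt_inf_right_of_relIndex_eq {A B F : Subgroup G} (hAB : A < B)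
    (hrel : F.relIndex A = F.relIndex B) (hB : F.relIndex B ≠ 0) : A ⊓ F < B ⊓ F := by
  refine lt_of_le_of_ne (inf_le_inf_right F hAB.le) fun heq => hAB.not_ge ?_
  have hmul : F.relIndex A * A.relIndex B = F.relIndex A :=
    calc F.relIndex A * A.relIndex B = (A ⊓ F).relIndex A * A.relIndex B := by
          rw [inf_relIndex_left]
      _ = (B ⊓ F).relIndex B := by
          rw [relIndex_mul_relIndex _ _ _ inf_le_left hAB.le, heq]
      _ = F.relIndex A := by rw [inf_relIndex_left, hrel]
  exact relIndex_eq_one.mp ((mul_eq_left₀ (hrel ▸ hB)).mp hmul)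

end Subgroup

section conjSub

variable {G : Type*} [Group G]

theorem conjSub_strictMono (g : G) : StrictMono (conjSub g) := fun _ _ h =>
  (Subgroup.map_lt_map_iff_of_injective (MulAut.conj g⁻¹).injective).mpr h

theorem conjSub_conjSub (a b : G) (A : Subgroup G) :
    conjSub b (conjSub a A) = conjSub (a * b) A := by
  unfold conjSub
  rw [Subgroup.map_map]
  congr 1
  ext y
  simp [mul_assoc]

theorem conjSub_inf (g : G) (A B : Subgroup G) :
    conjSub g (A ⊓ B) = conjSub g A ⊓ conjSub g B :=
  Subgroup.map_inf A B _ (MulAut.conj g⁻¹).injective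

theorem conjSub_of_normal {F : Subgroup G} (hF : F.Normal) (g : G) : conjSub g F = F :=
  Subgroup.normal_iff_map_conj_eq.mp hF g⁻¹

theorem relIndex_conjSub_of_normal {F : Subgroup G} (hF : F.Normal) (g : G) (H : Subgroup G) :
    F.relIndex (conjSub g H) = F.relIndex H :=
  calc F.relIndex (conjSub g H) = (conjSub g F).relIndex (conjSub g H) := by
        rw [conjSub_of_normal hF]
    _ = F.relIndex H := Subgroup.relIndex_map_map_of_injective _ _ (MulAut.conj g⁻¹).injective

theorem conjSub_pow_lt_conjSub_pow_succ {A : Subgroup G} {x : G} (h : A < conjSub x A) (n : ℕ) :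
    conjSub (x ^ n) A < conjSub (x ^ (n + 1)) A := by
  rw [pow_succ', ← conjSub_conjSub]
  exact conjSub_strictMono _ h

theorem inf_lt_conjSub_inf_of_normal {F H : Subgroup G} (hF : F.Normal) (hFind : F.index ≠ 0)
    {x : G} (h : H < conjSub x H) : H ⊓ F < conjSub x (H ⊓ F) := by
  rw [conjSub_inf, conjSub_of_normal hF]
  refine Subgroup.inf_lt_inf_right_of_relIndex_eq h (relIndex_conjSub_of_normal hF x H).symm ?_
  exact ne_zero_of_dvd_ne_zero hFind (F.relIndex_dvd_index_of_normal _)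

end conjSub

theorem stmt14 {G : Type*} [Group G] (F : Subgroup G) (hFnorm : F.Normal)
    (hFind : F.index ≠ 0) (H : Subgroup G) (x : G)
    (h : H < conjSub x H) :
    ∀ n : ℕ, conjSub (x ^ n) (H ⊓ F) < conjSub (x ^ (n + 1)) (H ⊓ F) :=
  conjSub_pow_lt_conjSub_pow_succ (inf_lt_conjSub_inf_of_normal hFnorm hFind h)
end

section
/- For any natural numbers r, s ≥ 2 and t ≥ 1, there exists a finite connected bipartite graph with vertex parts V₁, V₂ such that every vertex of V₁ has degree r, every vertex of V₂ has degree s, and the graph contains no cycle of length less than t. -/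
/-!
Let `Γ = C_r * C_s`. For a group `H` with a homomorphism `f : Γ → H`, let `A`, `B` be the images of
the two factors and join the cosets `gA` and `gB` for every `g ∈ H`. This coset graph is bipartite,
connected when `f` is onto, and `(|A|, |B|)`-biregular when `f` is injective on the factors with
`A ∩ B = 1`. Lifting a cycle of length `ℓ` step by step to `H` produces a reduced word of length
`ℓ - 1` whose image lies in `A` or `B`; so if `f` separates the reduced words of length `≤ t`, every
cycle has length `≥ t + 2`.

A finite such quotient comes from letting `Γ` act on the finite set of reduced words of length
`≤ t`: each factor acts as it does on all reduced words at those words whose whole orbit under the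
factor stays short, and trivially on the others. This is an action because the condition is
invariant under the factor, and a reduced word `w` of length `≤ t` moves the empty word to `w`.
-/

namespace MulAction

variable {M α : Type*} [Group M] [MulAction M α] (s : Set α)

open Classical in
noncomputable def restrictSMul (g : M) (x : s) : s :=
  if h : orbit M (x : α) ⊆ s then ⟨g • (x : α), h (mem_orbit _ g)⟩ else x

variable {s}

lemma coe_restrictSMul_of_orbit_subset {x : s} (h : orbit M (x : α) ⊆ s) (g : M) :
    (restrictSMul s g x : α) = g • (x : α) := by
  simp [restrictSMul, h]

lemma restrictSMul_one (x : s) : restrictSMul s (1 : M) x = x := by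
  unfold restrictSMul; split_ifs <;> simp

lemma restrictSMul_mul (g h : M) (x : s) :
    restrictSMul s (g * h) x = restrictSMul s g (restrictSMul s h x) := by
  by_cases hx : orbit M (x : α) ⊆ s
  · have hhx : orbit M (restrictSMul s h x : α) ⊆ s := by
      rwa [coe_restrictSMul_of_orbit_subset hx, orbit_smul]
    ext
    rw [coe_restrictSMul_of_orbit_subset hx, coe_restrictSMul_of_orbit_subset hhx,
      coe_restrictSMul_of_orbit_subset hx, mul_smul]
  · simp [restrictSMul, hx]

variable (s) in
noncomputable def restrictPerm : M →* Equiv.Perm s where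
  toFun g :=
    { toFun := restrictSMul s g
      invFun := restrictSMul s g⁻¹
      left_inv x := by rw [← restrictSMul_mul, inv_mul_cancel, restrictSMul_one]
      right_inv x := by rw [← restrictSMul_mul, mul_inv_cancel, restrictSMul_one] }
  map_one' := Equiv.ext (restrictSMul_one (M := M))
  map_mul' g h := Equiv.ext (restrictSMul_mul g h)

lemma restrictPerm_apply (g : M) (x : s) : restrictPerm s g x = restrictSMul s g x := rfl

end MulAction

namespace Monoid.CoprodI.Word

variable {ι : Type*} {G : ι → Type*} [∀ i, Group (G i)] [DecidableEq ι] [∀ i, DecidableEq (G i)]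

lemma smul_eq_cons {i : ι} {m : G i} {w : Word G} (hw : w.fstIdx ≠ some i) (hm : m ≠ 1) :
    m • w = cons m w hw hm :=
  cons_eq_smul.symm

lemma length_smul_le {i : ι} {w : Word G} (hw : w.fstIdx ≠ some i) (m : G i) :
    (m • w).toList.length ≤ w.toList.length + 1 := by
  by_cases hm : m = 1
  · simp [hm]
  · simp [smul_eq_cons hw hm]

lemma length_equiv_of_le_one {i : ι} (m : G i) : (equiv (of m)).toList.length ≤ 1 :=
  length_smul_le (w := empty) (by simp [fstIdx, empty]) m

lemma prod_equiv (x : CoprodI G) : (equiv x).prod = x := equiv.symm_apply_apply x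

variable (G) in
def shortWords (n : ℕ) : Set (Word G) := {w | w.toList.length ≤ n}

variable (G) in
noncomputable def truncHom (n : ℕ) : CoprodI G →* Equiv.Perm (shortWords G n) :=
  lift fun i => MulAction.restrictPerm (M := G i) (shortWords G n)

lemma truncHom_prod_apply_empty {n : ℕ} (w : Word G) (hw : w ∈ shortWords G n) :
    truncHom G n w.prod ⟨empty, Nat.zero_le n⟩ = ⟨w, hw⟩ := by
  induction w using consRecOn with
  | empty => rfl
  | cons i m w hidx hm ih =>
    have hlt : w.toList.length + 1 ≤ n := by simpa [shortWords] using hw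
    have horbit : MulAction.orbit (G i) w ⊆ shortWords G n := by
      rintro _ ⟨m', rfl⟩
      exact (length_smul_le hidx m').trans hlt
    rw [prod_cons, map_mul, Equiv.Perm.mul_apply, ih (by simp [shortWords]; omega)]
    ext1
    rw [truncHom, lift_of, MulAction.restrictPerm_apply,
      MulAction.coe_restrictSMul_of_orbit_subset horbit, smul_eq_cons hidx hm]

lemma truncHom_injOn (n : ℕ) : Set.InjOn (fun w : Word G => truncHom G n w.prod) (shortWords G n) :=
  fun w hw w' hw' h => by
    simpa [truncHom_prod_apply_empty w hw, truncHom_prod_apply_empty w' hw'] using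
      congrArg (· ⟨empty, Nat.zero_le n⟩) h

instance [Finite ι] [∀ i, Finite (G i)] (n : ℕ) : Finite (shortWords G n) :=
  ((List.finite_length_le _ n).preimage (fun _ _ _ _ => Word.ext) : Set.Finite _)

end Monoid.CoprodI.Word

namespace Monoid.CoprodI

open Word SimpleGraph

variable {G : Bool → Type*} [∀ i, Group (G i)] {H : Type*} [Group H] (f : CoprodI G →* H)

def summandRange (i : Bool) : Subgroup H := (f.comp (of (i := i))).range

def cosetVert : Bool → H → H ⧸ summandRange f true ⊕ H ⧸ summandRange f false
  | true, g => .inl g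
  | false, g => .inr g

variable {f}

lemma of_mem_summandRange {i : Bool} (m : G i) : f (of m) ∈ summandRange f i := ⟨m, rfl⟩

lemma cosetVert_mul_of {i : Bool} (g : H) (m : G i) :
    cosetVert f i (g * f (of m)) = cosetVert f i g := by
  cases i <;> simp only [cosetVert, QuotientGroup.mk_mul_of_mem g (of_mem_summandRange m)]

lemma cosetVert_eq_cosetVert_iff {i : Bool} {g g' : H} :
    cosetVert f i g = cosetVert f i g' ↔ ∃ m : G i, g' = g * f (of m) := by
  have key : (g : H ⧸ summandRange f i) = g' ↔ ∃ m : G i, g' = g * f (of m) := by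
    rw [QuotientGroup.eq, summandRange, MonoidHom.mem_range]
    simp only [MonoidHom.comp_apply, eq_comm (a := f _), inv_mul_eq_iff_eq_mul]
  cases i <;> simpa [cosetVert] using key

lemma eq_of_cosetVert_eq {i j : Bool} {g g' : H} (h : cosetVert f i g = cosetVert f j g') :
    i = j := by
  cases i <;> cases j <;> simp_all [cosetVert]

lemma exists_eq_cosetVert (v : H ⧸ summandRange f true ⊕ H ⧸ summandRange f false) :
    ∃ i g, v = cosetVert f i g := by
  rcases v with x | x <;> obtain ⟨g, rfl⟩ := QuotientGroup.mk_surjective x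
  exacts [⟨true, g, rfl⟩, ⟨false, g, rfl⟩]

variable (f) in
def cosetGraph : SimpleGraph (H ⧸ summandRange f true ⊕ H ⧸ summandRange f false) where
  Adj p q := ∃ i g, p = cosetVert f i g ∧ q = cosetVert f (!i) g
  symm := ⟨fun _ _ ⟨i, g, hp, hq⟩ => ⟨!i, g, hq, by rwa [Bool.not_not]⟩⟩
  loopless := ⟨fun _ ⟨i, _, hp, hq⟩ =>
    Bool.not_ne_self i (eq_of_cosetVert_eq (hp.symm.trans hq)).symm⟩

lemma cosetGraph_adj_cosetVert_not (i : Bool) (g : H) :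
    (cosetGraph f).Adj (cosetVert f i g) (cosetVert f (!i) g) :=
  ⟨i, g, rfl, rfl⟩

lemma cosetGraph_adj_cosetVert_iff {i : Bool} {g : H} {v} :
    (cosetGraph f).Adj (cosetVert f i g) v ↔ ∃ m : G i, v = cosetVert f (!i) (g * f (of m)) := by
  constructor
  · rintro ⟨j, g', hp, rfl⟩
    obtain rfl := eq_of_cosetVert_eq hp
    obtain ⟨m, rfl⟩ := cosetVert_eq_cosetVert_iff.1 hp
    exact ⟨m, rfl⟩
  · rintro ⟨m, rfl⟩
    rw [← cosetVert_mul_of g m]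
    exact cosetGraph_adj_cosetVert_not i _

lemma cosetGraph_not_adj_inl_inl (a b : H ⧸ summandRange f true) :
    ¬ (cosetGraph f).Adj (.inl a) (.inl b) := by
  rintro ⟨(_ | _), g, hp, hq⟩ <;> simp [cosetVert] at hp hq

lemma cosetGraph_not_adj_inr_inr (a b : H ⧸ summandRange f false) :
    ¬ (cosetGraph f).Adj (.inr a) (.inr b) := by
  rintro ⟨(_ | _), g, hp, hq⟩ <;> simp [cosetVert] at hp hq

lemma cosetGraph_reachable_mul (x : CoprodI G) (j : Bool) (g : H) :
    (cosetGraph f).Reachable (cosetVert f j g) (cosetVert f j (g * f x)) := by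
  induction x using CoprodI.induction_on generalizing g with
  | one => simp
  | of i m =>
    obtain rfl | rfl : i = j ∨ i = !j := by cases i <;> cases j <;> simp
    · rw [cosetVert_mul_of]
    · have h₁ := cosetGraph_adj_cosetVert_not (f := f) j g
      have h₂ := cosetGraph_adj_cosetVert_not (f := f) (!j) (g * f (of m))
      rw [cosetVert_mul_of, Bool.not_not] at h₂
      exact h₁.reachable.trans h₂.reachable
  | mul x y hx hy => simpa [mul_assoc] using (hx g).trans (hy (g * f x))

lemma cosetGraph_connected (hf : Function.Surjective f) : (cosetGraph f).Connected := by
  have hroot (v) : (cosetGraph f).Reachable (cosetVert f true 1) v := by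
    obtain ⟨j, g, rfl⟩ := exists_eq_cosetVert v
    obtain ⟨x, rfl⟩ := hf g
    have h := cosetGraph_reachable_mul (f := f) x true 1
    rw [one_mul] at h
    cases j
    · exact h.trans (cosetGraph_adj_cosetVert_not true _).reachable
    · exact h
  exact ⟨fun v w => (hroot v).symm.trans (hroot w)⟩

/-- Each step of `p` multiplies the representative by a letter of the factor of the current side;
the letters are nontrivial because `p` does not backtrack, the first one because of `hprev`. -/
lemma exists_word_of_isPath {u v} (p : (cosetGraph f).Walk u v) (hp : p.IsPath) (i : Bool)
    (g : H) (hu : u = cosetVert f i g) (hprev : cosetVert f (!i) g ∉ p.support) :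
    ∃ (w : Word G) (k : Bool), w.toList.length = p.length ∧ w.fstIdx ≠ some (!i) ∧
      v = cosetVert f k (g * f w.prod) := by
  induction p generalizing i g with
  | nil => exact ⟨empty, i, rfl, by simp [fstIdx, empty], by simpa [prod_empty] using hu⟩
  | cons hadj q ih =>
    subst hu
    obtain ⟨hq, hnot⟩ := Walk.cons_isPath_iff _ _ |>.1 hp
    obtain ⟨m, rfl⟩ := cosetGraph_adj_cosetVert_iff.1 hadj
    have hm : m ≠ 1 := by
      rintro rfl
      apply hprev
      rw [Walk.support_cons]
      refine List.mem_cons_of_mem _ ?_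
      convert q.start_mem_support using 1
      simp
    obtain ⟨w, k, hlen, hidx, hv⟩ :=
      ih hq (!i) (g * f (of m)) rfl (by rwa [Bool.not_not, cosetVert_mul_of])
    refine ⟨cons m w (by simpa using hidx) hm, k, by simp [hlen], by simp, ?_⟩
    simp [hv, mul_assoc]

variable [∀ i, DecidableEq (G i)]

lemma eq_one_of_map_of_eq (hf : Set.InjOn (fun w : Word G => f w.prod) (shortWords G 1))
    {i j : Bool} (hij : i ≠ j) {x : G i} {y : G j} (h : f (of x) = f (of y)) : x = 1 := by
  have hw : equiv (of x) = equiv (of y) :=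
    hf (length_equiv_of_le_one x) (length_equiv_of_le_one y) (by simpa [prod_equiv] using h)
  simpa [lift_of, Pi.mulSingle_eq_of_ne hij.symm] using
    congrArg (lift (Pi.mulSingle i (MonoidHom.id (G i)))) (equiv.injective hw)

lemma cosetGraph_degree (hf : Set.InjOn (fun w : Word G => f w.prod) (shortWords G 1))
    (i : Bool) (g : H) [Fintype ((cosetGraph f).neighborSet (cosetVert f i g))] :
    (cosetGraph f).degree (cosetVert f i g) = Nat.card (G i) := by
  have hN : (cosetGraph f).neighborSet (cosetVert f i g) =
      Set.range fun m : G i => cosetVert f (!i) (g * f (of m)) := by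
    ext
    simp [mem_neighborSet, cosetGraph_adj_cosetVert_iff, eq_comm]
  have hinj : Function.Injective fun m : G i => cosetVert f (!i) (g * f (of m)) := by
    intro m m' h
    obtain ⟨y, hy⟩ := cosetVert_eq_cosetVert_iff.1 h
    have hy' : f (of (m⁻¹ * m')) = f (of y) := by
      rw [mul_assoc, mul_left_cancel_iff] at hy
      simp [hy]
    exact inv_mul_eq_one.1 (eq_one_of_map_of_eq hf (Bool.not_ne_self i).symm hy')
  rw [← card_neighborSet_eq_degree, ← Nat.card_eq_fintype_card, hN,
    Nat.card_range_of_injective hinj]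

lemma length_le_one_of_map_prod_eq {n : ℕ}
    (hf : Set.InjOn (fun w : Word G => f w.prod) (shortWords G n)) {w : Word G}
    (hw : w.toList.length ≤ n) {i : Bool} (y : G i) (h : f w.prod = f (of y)) :
    w.toList.length ≤ 1 := by
  by_contra hlt
  have hw' : w = equiv (of y) :=
    hf hw ((length_equiv_of_le_one y).trans (by omega)) (by simpa [prod_equiv] using h)
  exact hlt (hw' ▸ length_equiv_of_le_one y)

lemma le_egirth_cosetGraph {n : ℕ} (hf : Set.InjOn (fun w : Word G => f w.prod) (shortWords G n)) :
    ((n + 2 : ℕ) : ℕ∞) ≤ (cosetGraph f).egirth := by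
  rw [le_egirth]
  intro u c hc
  by_contra! hlt
  replace hlt : c.length < n + 2 := by exact_mod_cast hlt
  have h3 := hc.three_le_length
  rcases c with _ | ⟨h₁, _ | ⟨h₂, r⟩⟩
  · simp at h3
  · simp at h3
  simp only [Walk.length_cons] at hlt h3
  -- `c` is `u - v₁ - v₂ - ⋯ - u`; lift `v₂ - ⋯ - u` from a representative `g` of the edge `v₁v₂`.
  obtain ⟨hr, hv₁⟩ := Walk.cons_isPath_iff _ _ |>.1 (Walk.cons_isCycle_iff _ _ |>.1 hc).1
  obtain ⟨j, g, rfl, rfl⟩ := h₂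
  obtain ⟨w, k, hlen, hidx, hu⟩ :=
    exists_word_of_isPath r hr (!j) g rfl (by rwa [Bool.not_not])
  obtain ⟨m, hum⟩ := cosetGraph_adj_cosetVert_iff.1 h₁.symm
  have hm : m ≠ 1 := by
    rintro rfl
    simp only [map_one, mul_one] at hum
    subst hum
    simp [(Walk.isPath_iff_nil.1 hr).length_eq_zero] at h3
  obtain rfl := eq_of_cosetVert_eq (hum.symm.trans hu)
  obtain ⟨y, hy⟩ := cosetVert_eq_cosetVert_iff.1 (hum.symm.trans hu)
  have hw' : f (cons m⁻¹ w (by simpa using hidx) (inv_ne_one.2 hm)).prod = f (of y) := by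
    rw [mul_assoc, mul_left_cancel_iff] at hy
    simp [hy]
  have := length_le_one_of_map_prod_eq hf (by simp; omega) y hw'
  rw [cons_toList, List.length_cons] at this
  omega

universe u in
theorem exists_surjective_injOn_shortWords {G : Bool → Type u} [∀ i, Group (G i)]
    [∀ i, DecidableEq (G i)] [∀ i, Finite (G i)] (n : ℕ) :
    ∃ (H : Type u) (_ : Group H) (_ : Finite H) (f : CoprodI G →* H),
      Function.Surjective f ∧ Set.InjOn (fun w : Word G => f w.prod) (shortWords G n) := by
  refine ⟨↥(truncHom G n).range, inferInstance, inferInstance, (truncHom G n).rangeRestrict,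
    MonoidHom.rangeRestrict_surjective _, fun w hw w' hw' h => ?_⟩
  exact truncHom_injOn n hw hw' (congrArg Subtype.val h)

end Monoid.CoprodI

lemma SimpleGraph.Connected.not_isAcyclic_of_two_le_degree {V : Type*} [Fintype V]
    [Nontrivial V] {G : SimpleGraph V} [DecidableRel G.Adj] (hG : G.Connected)
    (h : ∀ v, 2 ≤ G.degree v) : ¬ G.IsAcyclic := fun hac => by
  obtain ⟨v, hv⟩ := IsTree.exists_vert_degree_one_of_nontrivial ⟨hG, hac⟩
  have := h v
  omega

open Monoid.CoprodI in
/-- For all `r, s ≥ 2` and `t ≥ 1` there is a finite connected bipartite graph in which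
every vertex of the first part has degree `r`, every vertex of the second part has
degree `s`, and there is no cycle of length less than `t` (i.e. the girth is ≥ `t`). -/
theorem stmt17 (r s t : ℕ) (hr : 2 ≤ r) (hs : 2 ≤ s) (ht : 1 ≤ t) :
    ∃ (V₁ V₂ : Type) (_ : Fintype V₁) (_ : Fintype V₂)
      (_ : Nonempty V₁) (_ : Nonempty V₂)
      (G : SimpleGraph (V₁ ⊕ V₂)) (_ : DecidableRel G.Adj),
      (∀ a b : V₁, ¬ G.Adj (Sum.inl a) (Sum.inl b)) ∧
      (∀ a b : V₂, ¬ G.Adj (Sum.inr a) (Sum.inr b)) ∧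
      G.Connected ∧
      (∀ a : V₁, G.degree (Sum.inl a) = r) ∧
      (∀ b : V₂, G.degree (Sum.inr b) = s) ∧
      (t : ℕ∞) ≤ G.girth := by
  classical
  let C : Bool → Type := fun i => Multiplicative (ZMod (cond i r s))
  have : NeZero r := ⟨by omega⟩
  have : NeZero s := ⟨by omega⟩
  have : ∀ i, Finite (C i) := by rintro (_ | _) <;> dsimp [C] <;> infer_instance
  obtain ⟨H, _, _, f, hsurj, hinj⟩ := exists_surjective_injOn_shortWords (G := C) t
  let := Fintype.ofFinite (H ⧸ summandRange f true)
  let := Fintype.ofFinite (H ⧸ summandRange f false)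
  have hdeg (i : Bool) (g : H) : (cosetGraph f).degree (cosetVert f i g) = cond i r s := by
    rw [cosetGraph_degree (hinj.mono fun w hw => le_trans hw ht)]
    cases i <;> simp [C]
  have hconn := cosetGraph_connected hsurj
  have : Nontrivial (H ⧸ summandRange f true ⊕ H ⧸ summandRange f false) :=
    ⟨⟨cosetVert f true 1, cosetVert f false 1, Sum.inl_ne_inr⟩⟩
  have hcyc : ¬ (cosetGraph f).IsAcyclic := hconn.not_isAcyclic_of_two_le_degree fun v => by
    obtain ⟨i, g, rfl⟩ := exists_eq_cosetVert v
    cases i <;> simp [hdeg, hr, hs]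
  refine ⟨_, _, inferInstance, inferInstance, inferInstance, inferInstance, cosetGraph f,
    inferInstance, cosetGraph_not_adj_inl_inl, cosetGraph_not_adj_inr_inr, hconn,
    fun a => ?_, fun b => ?_, ?_⟩
  · obtain ⟨g, rfl⟩ := QuotientGroup.mk_surjective a
    exact hdeg true g
  · obtain ⟨g, rfl⟩ := QuotientGroup.mk_surjective b
    exact hdeg false g
  · rw [SimpleGraph.girth, ENat.natCast_toNat (mt SimpleGraph.egirth_eq_top.1 hcyc)]
    exact le_trans (by norm_cast; omega) (le_egirth_cosetGraph hinj)
end
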